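/- arXiv:2603.23464 — 7 statements merged into one kernel-verified Lean document; each statement's English description precedes it below -/
import Mathlib

section
/- Let P be a bounded poset with 0 ≠ 1, X_P = {(a,b) ∈ P × P | a ≰ b} ordered by (a,b) ⊑ (c,d) iff a ≤ c and d ≤ b, and let BP be the complete Boolean algebra of □◇-fixpoints of downsets of X_P. Define e : P → BP by e(a) = □◇↓(a,0) for a ≠ 0 and e(0) = ∅. Then e is order-preserving: a ≤ b implies e(a) ⊆ e(b). -/
/-- The poset `X_P = {(a,b) ∈ P × P | a ≰ b}`. -/
def XP (P : Type*) [Preorder P] : Type _ := {p : P × P // ¬ p.1 ≤ p.2}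

/-- Build an element of `X_P` from a pair `(a,b)` with `a ≰ b`. -/
def XP.mk {P : Type*} [Preorder P] (p : P × P) (h : ¬ p.1 ≤ p.2) : XP P := ⟨p, h⟩

/-- The underlying pair of an element of `X_P`. -/
def XP.val {P : Type*} [Preorder P] (x : XP P) : P × P := Subtype.val x

theorem XP.prop {P : Type*} [Preorder P] (x : XP P) : ¬ x.val.1 ≤ x.val.2 := Subtype.prop x

/-- The order `(a,b) ⊑ (c,d) ↔ a ≤ c ∧ d ≤ b` on `X_P`. -/
instance XP.instPartialOrder (P : Type*) [PartialOrder P] : PartialOrder (XP P) where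
  le x y := x.val.1 ≤ y.val.1 ∧ y.val.2 ≤ x.val.2
  le_refl x := ⟨le_refl _, le_refl _⟩
  le_trans x y z h h' := ⟨h.1.trans h'.1, h'.2.trans h.2⟩
  le_antisymm x y h h' :=
    Subtype.ext (Prod.ext (le_antisymm h.1 h'.1) (le_antisymm h'.2 h.2))

/-- Interior in the downset topology: `□U = {x | ↓x ⊆ U}`. -/
def box {α : Type*} [Preorder α] (U : Set α) : Set α := {x | ∀ y, y ≤ x → y ∈ U}

/-- Closure in the downset topology: `◇U = {x | ↓x ∩ U ≠ ∅}`. -/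
def dia {α : Type*} [Preorder α] (U : Set α) : Set α := {x | ∃ y, y ≤ x ∧ y ∈ U}

/-- The `⊑`-downset of `x` in `X_P`. -/
def dn {P : Type*} [PartialOrder P] (x : XP P) : Set (XP P) := {y | y ≤ x}

/-- For a bounded poset `P` with `0 ≠ 1`, the map
`e : P → BP` with `e 0 = ∅` and `e a = □◇↓(a,0)` for `a ≠ 0` is
order-preserving. -/
theorem funayama_e_monotone {P : Type*} [PartialOrder P] [BoundedOrder P]
    (hne : (⊥ : P) ≠ ⊤)
    (e : P → Set (XP P))
    (he0 : e ⊥ = ∅)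
    (he : ∀ (a : P) (h : ¬ a ≤ (⊥ : P)), e a = box (dia (dn (XP.mk (a, ⊥) h))))
    {a b : P} (hab : a ≤ b) :
    e a ⊆ e b := by
  by_cases ha : a ≤ (⊥ : P)
  · have : a = ⊥ := le_antisymm ha bot_le
    rw [this, he0]; exact Set.empty_subset _
  · have hb : ¬ b ≤ (⊥ : P) := fun hb => ha (hab.trans hb)
    rw [he a ha, he b hb]
    intro x hx y hy
    obtain ⟨z, hz, hz1, hz2⟩ := hx y hy
    exact ⟨z, hz, hz1.trans hab, hz2⟩
end

section
/- Let P be a bounded poset with 0 ≠ 1 and e : P → BP defined by e(a) = □◇↓(a,0) for a ≠ 0, e(0) = ∅, where BP is the regular open algebra of the poset X_P = {(a,b) | a ≰ b} with (a,b) ⊑ (c,d) iff a ≤ c and d ≤ b. Then e is order-reflecting: if a ≰ b in P, then e(a) ⊄ e(b); in fact (a,b) ∈ e(a) \ e(b). -/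
/-- For a bounded poset `P` with `0 ≠ 1`, the map
`e : P → BP` with `e 0 = ∅` and `e a = □◇↓(a,0)` for `a ≠ 0` is
order-reflecting: if `a ≰ b` then `(a,b) ∈ e a \ e b`, so `e a ⊄ e b`. -/
theorem funayama_e_reflecting {P : Type*} [PartialOrder P] [BoundedOrder P]
    (hne : (⊥ : P) ≠ ⊤)
    (e : P → Set (XP P))
    (he0 : e ⊥ = ∅)
    (he : ∀ (a : P) (h : ¬ a ≤ (⊥ : P)), e a = box (dia (dn (XP.mk (a, ⊥) h))))
    {a b : P} (hab : ¬ a ≤ b) :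
    XP.mk (a, b) hab ∈ e a \ e b ∧ ¬ e a ⊆ e b := by

  have ha : ¬ a ≤ (⊥ : P) := fun h => hab (h.trans bot_le)
  have hmem : XP.mk (a, b) hab ∈ e a := by
    rw [he a ha]
    intro y hy
    exact ⟨y, le_refl _, ⟨hy.1, bot_le⟩⟩
  have hnmem : XP.mk (a, b) hab ∉ e b := by
    by_cases hb : b ≤ (⊥ : P)
    · have : b = ⊥ := le_antisymm hb bot_le
      subst this; rw [he0]; exact fun h => h
    · rw [he b hb]
      intro h
      obtain ⟨z, hz1, hz2⟩ := h _ (le_refl _)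
      exact z.prop (hz2.1.trans hz1.2)
  exact ⟨⟨hmem, hnmem⟩, fun h => hnmem (h hmem)⟩
end

section
/- Let P be a bounded meet semilattice with 0 ≠ 1 and let e : P → BP be defined by e(a) = □◇↓(a,0) for a ≠ 0, e(0) = ∅, where BP is the regular open algebra of X_P = {(a,b) | a ≰ b} with (a,b) ⊑ (c,d) iff a ≤ c and d ≤ b. Then e preserves binary meets: e(a ∧ b) = e(a) ∩ e(b) for all a, b ∈ P. -/
lemma mem_e_iff {P : Type*} [SemilatticeInf P] [OrderBot P] (a : P)
    (h : ¬ a ≤ (⊥ : P)) (x : XP P) :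
    x ∈ box (dia (dn (XP.mk (a, ⊥) h))) ↔
      ∀ y : XP P, y ≤ x → ¬ (y.val.1 ⊓ a ≤ y.val.2) := by
  constructor
  · intro H y hy hle
    obtain ⟨z, hzy, hza⟩ := H y hy
    exact z.prop (le_trans (le_trans (le_inf hzy.1 hza.1) hle) hzy.2)
  · intro H y hy
    exact ⟨XP.mk (y.val.1 ⊓ a, y.val.2) (H y hy),
      ⟨inf_le_left, le_refl _⟩, ⟨inf_le_right, bot_le⟩⟩

/-- For a bounded meet semilattice `P` with `0 ≠ 1`, the map
`e : P → BP` with `e 0 = ∅` and `e a = □◇↓(a,0)` for `a ≠ 0` preserves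
binary meets: `e (a ⊓ b) = e a ∩ e b`. -/
theorem funayama_e_preserves_binary_meets {P : Type*} [SemilatticeInf P] [BoundedOrder P]
    (hne : (⊥ : P) ≠ ⊤)
    (e : P → Set (XP P))
    (he0 : e ⊥ = ∅)
    (he : ∀ (a : P) (h : ¬ a ≤ (⊥ : P)), e a = box (dia (dn (XP.mk (a, ⊥) h))))
    (a b : P) :
    e (a ⊓ b) = e a ∩ e b := by
  by_cases ha : a ≤ (⊥ : P)
  · have ha' : a = ⊥ := le_bot_iff.mp ha
    have : a ⊓ b = ⊥ := by simp [ha']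
    rw [this, he0, ha', he0, Set.empty_inter]
  by_cases hb : b ≤ (⊥ : P)
  · have hb' : b = ⊥ := le_bot_iff.mp hb
    have : a ⊓ b = ⊥ := by simp [hb']
    rw [this, he0, hb', he0, Set.inter_empty]
  by_cases hab : a ⊓ b ≤ (⊥ : P)
  · rw [le_bot_iff.mp hab, he0]
    ext x
    simp only [Set.mem_empty_iff_false, Set.mem_inter_iff, false_iff]
    rintro ⟨hxa, hxb⟩
    rw [he a ha, mem_e_iff] at hxa
    rw [he b hb, mem_e_iff] at hxb
    have h1 : ¬ (x.val.1 ⊓ a ≤ x.val.2) := hxa x le_rfl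
    have h2 := hxb (XP.mk (x.val.1 ⊓ a, x.val.2) h1) ⟨inf_le_left, le_refl _⟩
    exact h2 (show x.val.1 ⊓ a ⊓ b ≤ x.val.2 from
      ((inf_le_inf_right b inf_le_right).trans hab).trans bot_le)
  · rw [he _ hab, he a ha, he b hb]
    ext x
    simp only [Set.mem_inter_iff, mem_e_iff]
    constructor
    · intro H
      exact ⟨fun y hy hle => H y hy (le_trans (inf_le_inf_left _ inf_le_left) hle),
             fun y hy hle => H y hy (le_trans (inf_le_inf_left _ inf_le_right) hle)⟩
    · rintro ⟨Ha, Hb⟩ y hy hle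
      have h1 : ¬ (y.val.1 ⊓ a ≤ y.val.2) := Ha y hy
      have h2 := Hb (XP.mk (y.val.1 ⊓ a, y.val.2) h1) ⟨le_trans inf_le_left hy.1, hy.2⟩
      exact h2 (show y.val.1 ⊓ a ⊓ b ≤ y.val.2 from (inf_assoc _ _ _).le.trans hle)
end

section
/- The interior-of-closure operator □◇ on the downset topology of a poset distributes over finite intersections: □◇(U ∩ V) = □◇U ∩ □◇V for all downsets U, V. -/
/-- On the downset topology of a poset, the interior-of-closure
operator `□◇` distributes over binary (hence all finite) intersections of
downsets. -/
theorem boxdia_inter {Q : Type*} [PartialOrder Q] (U V : Set Q)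
    (hU : IsLowerSet U) (hV : IsLowerSet V) :
    box (dia (U ∩ V)) = box (dia U) ∩ box (dia V) := by
  ext x
  constructor
  · intro h
    constructor
    · intro y hy
      obtain ⟨z, hz, hzU, _⟩ := h y hy
      exact ⟨z, hz, hzU⟩
    · intro y hy
      obtain ⟨z, hz, _, hzV⟩ := h y hy
      exact ⟨z, hz, hzV⟩
  · rintro ⟨h1, h2⟩ y hy
    obtain ⟨z, hz, hzU⟩ := h1 y hy
    obtain ⟨w, hw, hwV⟩ := h2 z (hz.trans hy)
    exact ⟨w, hw.trans hz, hU hw hzU, hwV⟩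
end

section
/- Let P be a bounded meet semilattice with 0 ≠ 1 and e : P → BP the map e(a) = □◇↓(a,0) for a ≠ 0, e(0) = ∅, into the regular open algebra BP of X_P. If S ⊆ P has an exact join (i.e., ⋁S exists and for every a ∈ P, ⋁_{s∈S}(a ∧ s) exists and equals a ∧ ⋁S), then e(⋁S) equals the join in BP of {e(s) | s ∈ S}, namely □◇(⋃_{s∈S} e(s)). -/
/-! The element `e a` is the regularization `□◇` of the downset `{x ∈ X_P | x.1 ≤ a}` (which is
`↓(a,0)` for `a ≠ 0` and empty for `a = 0`). The regularization of a union of downsets is unchanged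
if each member is first regularized, so it suffices that `{x | x.1 ≤ ⋁S}` lies in the closure of
`⋃_{s ∈ S} {x | x.1 ≤ s}`. This is exactly where exactness enters: if `c ≤ ⋁S` and `c ≰ d`,
then `c = ⋁_{s ∈ S} (c ∧ s)`, so `c ∧ s ≰ d` for some `s ∈ S`, and `(c ∧ s, d) ⊑ (c, d)`. -/

section BoxDia

variable {α : Type*} [Preorder α]

lemma box_mono {U V : Set α} (h : U ⊆ V) : box U ⊆ box V := fun _ hx y hy => h (hx y hy)

lemma dia_mono {U V : Set α} (h : U ⊆ V) : dia U ⊆ dia V :=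
  fun _ ⟨y, hy, hU⟩ => ⟨y, hy, h hU⟩

lemma box_subset (U : Set α) : box U ⊆ U := fun x hx => hx x le_rfl

lemma subset_dia (U : Set α) : U ⊆ dia U := fun x hx => ⟨x, le_rfl, hx⟩

lemma dia_dia_subset (U : Set α) : dia (dia U) ⊆ dia U :=
  fun _ ⟨_, hy, z, hz, hU⟩ => ⟨z, hz.trans hy, hU⟩

lemma box_dia_empty : box (dia (∅ : Set α)) = ∅ :=
  Set.eq_empty_of_forall_notMem fun x hx => by simpa [dia] using hx x le_rfl

lemma subset_box_dia_of_isLowerSet {U : Set α} (hU : IsLowerSet U) : U ⊆ box (dia U) :=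
  fun _ hx _ hy => subset_dia U (hU hy hx)

lemma box_dia_subset_box_dia {A B : Set α} (h : A ⊆ dia B) : box (dia A) ⊆ box (dia B) :=
  box_mono fun _ hx => dia_dia_subset B (dia_mono h hx)

lemma box_dia_eq_box_dia {A B : Set α} (hAB : A ⊆ dia B) (hBA : B ⊆ dia A) :
    box (dia A) = box (dia B) :=
  (box_dia_subset_box_dia hAB).antisymm (box_dia_subset_box_dia hBA)

lemma box_dia_biUnion_box_dia {ι : Type*} (S : Set ι) (F : ι → Set α)
    (hF : ∀ i ∈ S, IsLowerSet (F i)) :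
    box (dia (⋃ i ∈ S, box (dia (F i)))) = box (dia (⋃ i ∈ S, F i)) := by
  refine box_dia_eq_box_dia ?_ ?_
  · refine Set.iUnion₂_subset fun i hi => (box_subset _).trans (dia_mono ?_)
    exact Set.subset_biUnion_of_mem (u := F) hi
  · refine (Set.biUnion_mono subset_rfl fun i hi => ?_).trans (subset_dia _)
    exact subset_box_dia_of_isLowerSet (hF i hi)

end BoxDia

namespace XP

lemma le_def {P : Type*} [PartialOrder P] {x y : XP P} :
    x ≤ y ↔ x.val.1 ≤ y.val.1 ∧ y.val.2 ≤ x.val.2 :=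
  Iff.rfl

def fstLE {P : Type*} [Preorder P] (a : P) : Set (XP P) := {x | x.val.1 ≤ a}

lemma isLowerSet_fstLE {P : Type*} [PartialOrder P] (a : P) : IsLowerSet (fstLE a) :=
  fun _ _ hyx hx => (le_def.mp hyx).1.trans hx

lemma fstLE_bot {P : Type*} [Preorder P] [OrderBot P] : fstLE (⊥ : P) = ∅ :=
  Set.eq_empty_of_forall_notMem fun x hx => x.prop (le_trans hx bot_le)

lemma dn_mk_bot {P : Type*} [PartialOrder P] [OrderBot P] (a : P) (h : ¬ a ≤ ⊥) :
    dn (XP.mk (a, ⊥) h) = fstLE a :=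
  Set.ext fun _ => and_iff_left bot_le

lemma biUnion_fstLE_subset {P : Type*} [Preorder P] {S : Set P} {m : P}
    (hm : m ∈ upperBounds S) : ⋃ s ∈ S, fstLE s ⊆ fstLE m :=
  Set.iUnion₂_subset fun _ hs _ hx => le_trans hx (hm hs)

lemma fstLE_subset_dia_biUnion {P : Type*} [SemilatticeInf P] {S : Set P} {m : P}
    (hexact : ∀ a : P, IsLUB ((fun s => a ⊓ s) '' S) (a ⊓ m)) :
    fstLE m ⊆ dia (⋃ s ∈ S, fstLE s) := by
  intro x (hxm : x.val.1 ≤ m)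
  have hlub := hexact x.val.1
  rw [inf_eq_left.mpr hxm] at hlub
  obtain ⟨s, hs, hxs⟩ : ∃ s ∈ S, ¬ x.val.1 ⊓ s ≤ x.val.2 := by
    by_contra! hle
    exact x.prop (hlub.2 (Set.forall_mem_image.mpr hle))
  exact ⟨⟨(x.val.1 ⊓ s, x.val.2), hxs⟩, ⟨inf_le_left, le_rfl⟩,
    Set.mem_biUnion hs (inf_le_right : x.val.1 ⊓ s ≤ s)⟩

end XP

theorem funayama_e_preserves_exact_joins_general {P : Type*} [SemilatticeInf P] [BoundedOrder P]
    (e : P → Set (XP P))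
    (he0 : e ⊥ = ∅)
    (he : ∀ (a : P) (h : ¬ a ≤ (⊥ : P)), e a = box (dia (dn (XP.mk (a, ⊥) h))))
    (S : Set P) (m : P)
    (hm : IsLUB S m)
    (hexact : ∀ a : P, IsLUB ((fun s => a ⊓ s) '' S) (a ⊓ m)) :
    e m = box (dia (⋃ s ∈ S, e s)) := by
  have he' : ∀ a, e a = box (dia (XP.fstLE a)) := fun a => by
    by_cases ha : a ≤ ⊥
    · rw [le_bot_iff.mp ha, he0, XP.fstLE_bot, box_dia_empty]
    · rw [he a ha, XP.dn_mk_bot]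
  simp only [he']
  rw [box_dia_biUnion_box_dia S _ fun s _ => XP.isLowerSet_fstLE s]
  exact box_dia_eq_box_dia (XP.fstLE_subset_dia_biUnion hexact)
    ((XP.biUnion_fstLE_subset hm.1).trans (subset_dia _))

/-- For a bounded meet semilattice `P` with `0 ≠ 1` and the map
`e : P → BP` with `e 0 = ∅`, `e a = □◇↓(a,0)` for `a ≠ 0`: if `S ⊆ P` has an
exact join `m = ⋁S` (i.e. for every `a`, `a ⊓ m` is the join of `{a ⊓ s | s ∈ S}`),
then `e m` is the join in `BP` of `{e s | s ∈ S}`, namely `□◇(⋃_{s ∈ S} e s)`. -/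
theorem funayama_e_preserves_exact_joins {P : Type*} [SemilatticeInf P] [BoundedOrder P]
    (hne : (⊥ : P) ≠ ⊤)
    (e : P → Set (XP P))
    (he0 : e ⊥ = ∅)
    (he : ∀ (a : P) (h : ¬ a ≤ (⊥ : P)), e a = box (dia (dn (XP.mk (a, ⊥) h))))
    (S : Set P) (m : P)
    (hm : IsLUB S m)
    (hexact : ∀ a : P, IsLUB ((fun s => a ⊓ s) '' S) (a ⊓ m)) :
    e m = box (dia (⋃ s ∈ S, e s)) :=
  funayama_e_preserves_exact_joins_general e he0 he S m hm hexact
end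

section
/- For any meet semilattice M, there is an embedding of M into a complete Boolean algebra that preserves all existing finite meets and all existing exact joins. -/
/-!
The exact ideals of `M` (down-sets closed under exact joins) form a sublocale of the frame of
down-sets: if `I` is exact then so is `A ⇨ I`, because an element `y` below an exact join `⋁ S`
is the exact join of the `y ⊓ s`. Principal ideals embed `M` into this frame, preserving finite
meets and sending exact joins to joins. A frame `L` in turn embeds into its frame of nuclei by
`x ↦ x ⊔ -`, preserving finite meets and all joins. These closed nuclei are complemented (by the
open nuclei `x ⇨ -`), hence regular, and the regular elements of a frame form a complete Boolean
algebra in which a join of regular elements is the double negation of their join in the frame, so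
the image of the closed nuclei keeps all joins.
-/

universe u

namespace Heyting.Regular

variable {α : Type*} [Order.Frame α]

noncomputable instance : CompleteLattice (Regular α) := gi.liftCompleteLattice

noncomputable instance : CompleteBooleanAlgebra (Regular α) :=
  { (inferInstance : BooleanAlgebra (Regular α)),
    (inferInstance : CompleteLattice (Regular α)) with }

theorem isLUB_of_isLUB_coe {s : Set (Regular α)} {a : Regular α}
    (h : IsLUB (((↑) : Regular α → α) '' s) a) : IsLUB s a :=
  h.of_image coe_le_coe

end Heyting.Regular

section Nucleus

variable {X : Type*}

def closedNucleus [DistribLattice X] (x : X) : Nucleus X where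
  toFun y := x ⊔ y
  map_inf' := sup_inf_left x
  idempotent' y := by rw [← sup_assoc, sup_idem]
  le_apply' _ := le_sup_right

@[simp] theorem closedNucleus_apply [DistribLattice X] (x y : X) :
    closedNucleus x y = x ⊔ y := rfl

def openNucleus [GeneralizedHeytingAlgebra X] (x : X) : Nucleus X where
  toFun y := x ⇨ y
  map_inf' := himp_inf_distrib x
  idempotent' y := by rw [himp_himp, inf_idem]
  le_apply' _ := le_himp

@[simp] theorem openNucleus_apply [GeneralizedHeytingAlgebra X] (x y : X) :
    openNucleus x y = x ⇨ y := rfl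

variable [Order.Frame X]

theorem isCompl_closedNucleus_openNucleus (x : X) : IsCompl (closedNucleus x) (openNucleus x) where
  disjoint := disjoint_iff_inf_le.2 fun y => by
    rw [Nucleus.inf_apply, closedNucleus_apply, openNucleus_apply, inf_sup_right, inf_himp]
    exact sup_le inf_le_right inf_le_left
  codisjoint := codisjoint_iff_le_sup.2 fun y => by
    set k := closedNucleus x ⊔ openNucleus x
    -- `k ⊥` contains `x` and is `k`-closed, so it also contains `x ⇨ k ⊥ = ⊤`.
    have hx : x ≤ k ⊥ := by simpa using (le_sup_left : closedNucleus x ≤ k) ⊥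
    have hbot : k ⊥ = ⊤ := top_le_iff.1 <| calc
      ⊤ = openNucleus x (k ⊥) := (himp_eq_top_iff.2 hx).symm
      _ ≤ k (k ⊥) := (le_sup_right : openNucleus x ≤ k) _
      _ = k ⊥ := k.idempotent _
    simpa [hbot] using k.monotone (bot_le : ⊥ ≤ y)

theorem isRegular_closedNucleus (x : X) : Heyting.IsRegular (closedNucleus x) := by
  have h := isCompl_closedNucleus_openNucleus x
  rw [Heyting.IsRegular, h.compl_eq, h.symm.compl_eq]

theorem closedNucleus_le_closedNucleus {x y : X} :
    closedNucleus x ≤ closedNucleus y ↔ x ≤ y :=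
  ⟨fun h => by simpa using h ⊥, fun h z => sup_le_sup_right h z⟩

theorem closedNucleus_inf (x y : X) :
    closedNucleus (x ⊓ y) = closedNucleus x ⊓ closedNucleus y := by
  ext z
  exact sup_inf_right x y z

theorem closedNucleus_top : closedNucleus (⊤ : X) = ⊤ := by
  ext z
  exact top_sup_eq z

theorem closedNucleus_sSup (s : Set X) : closedNucleus (sSup s) = sSup (closedNucleus '' s) := by
  refine le_antisymm (fun y => sup_le (sSup_le fun x hx => ?_) Nucleus.le_apply)
    (sSup_le <| Set.forall_mem_image.2 fun x hx => closedNucleus_le_closedNucleus.2 (le_sSup hx))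
  exact le_sup_left.trans ((le_sSup (Set.mem_image_of_mem _ hx) : closedNucleus x ≤ _) y)

def regularClosedNucleus (x : X) : Heyting.Regular (Nucleus X) :=
  ⟨closedNucleus x, isRegular_closedNucleus x⟩

theorem regularClosedNucleus_le_regularClosedNucleus {x y : X} :
    regularClosedNucleus x ≤ regularClosedNucleus y ↔ x ≤ y :=
  closedNucleus_le_closedNucleus

theorem regularClosedNucleus_inf (x y : X) :
    regularClosedNucleus (x ⊓ y) = regularClosedNucleus x ⊓ regularClosedNucleus y :=
  Heyting.Regular.coe_injective (closedNucleus_inf x y)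

theorem regularClosedNucleus_top : regularClosedNucleus (⊤ : X) = ⊤ :=
  Heyting.Regular.coe_injective closedNucleus_top

theorem regularClosedNucleus_sSup (s : Set X) :
    regularClosedNucleus (sSup s) = sSup (regularClosedNucleus '' s) := by
  refine (Heyting.Regular.isLUB_of_isLUB_coe ?_).sSup_eq.symm
  rw [Set.image_image]
  change IsLUB (closedNucleus '' s) (closedNucleus (sSup s))
  rw [closedNucleus_sSup]
  exact isLUB_sSup _

end Nucleus

section ExactIdeal

variable {M : Type*} [SemilatticeInf M]

def IsExactLUB (S : Set M) (m : M) : Prop :=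
  IsLUB S m ∧ ∀ a : M, IsLUB ((fun s => a ⊓ s) '' S) (a ⊓ m)

theorem IsExactLUB.inf {S : Set M} {m : M} (h : IsExactLUB S m) (a : M) :
    IsExactLUB ((fun s => a ⊓ s) '' S) (a ⊓ m) := by
  refine ⟨h.2 a, fun b => ?_⟩
  rw [Set.image_image, ← inf_assoc]
  simpa only [inf_assoc] using h.2 (b ⊓ a)

theorem IsExactLUB.inf_of_le {S : Set M} {m a : M} (h : IsExactLUB S m) (ha : a ≤ m) :
    IsExactLUB ((fun s => a ⊓ s) '' S) a := by
  simpa only [inf_eq_left.2 ha] using h.inf a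

def LowerSet.IsExactIdeal (I : LowerSet M) : Prop :=
  ∀ ⦃S : Set M⦄, S ⊆ I → ∀ ⦃m : M⦄, IsExactLUB S m → m ∈ I

namespace LowerSet

theorem isExactIdeal_Iic (a : M) : (Iic a).IsExactIdeal := fun _ hS _ hm => hm.1.2 hS

theorem isExactIdeal_sInf {s : Set (LowerSet M)} (hs : ∀ I ∈ s, I.IsExactIdeal) :
    (sInf s).IsExactIdeal := by
  intro S hS m hm
  simp only [← SetLike.mem_coe, coe_sInf, Set.mem_iInter₂] at hS ⊢
  exact fun I hI => hs I hI (fun x hx => Set.mem_iInter₂.1 (hS hx) I hI) hm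

theorem IsExactIdeal.himp {I : LowerSet M} (hI : I.IsExactIdeal) (A : LowerSet M) :
    (A ⇨ I).IsExactIdeal := by
  intro S hS m hm
  rw [← Iic_le, le_himp_iff]
  rintro y ⟨hym, hyA⟩
  refine hI ?_ (hm.inf_of_le hym)
  rintro _ ⟨s, hs, rfl⟩
  exact le_himp_iff.1 (Iic_le.2 (hS hs)) ⟨inf_le_right, A.lower inf_le_left hyA⟩

end LowerSet

variable (M) in
def exactIdeals : Sublocale (LowerSet M) where
  carrier := {I | I.IsExactIdeal}
  sInf_mem' _ hs := LowerSet.isExactIdeal_sInf hs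
  himp_mem' A _ hI := LowerSet.IsExactIdeal.himp hI A

def principalExactIdeal (a : M) : exactIdeals M := ⟨LowerSet.Iic a, LowerSet.isExactIdeal_Iic a⟩

theorem principalExactIdeal_le_principalExactIdeal {a b : M} :
    principalExactIdeal a ≤ principalExactIdeal b ↔ a ≤ b :=
  LowerSet.Iic_le.trans LowerSet.mem_Iic_iff

theorem principalExactIdeal_inf (a b : M) :
    principalExactIdeal (a ⊓ b) = principalExactIdeal a ⊓ principalExactIdeal b :=
  Subtype.ext (LowerSet.Iic_inf a b)

theorem principalExactIdeal_of_isTop {m : M} (hm : IsTop m) : principalExactIdeal m = ⊤ :=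
  Subtype.ext <| SetLike.coe_injective <| Set.eq_univ_of_forall hm

theorem isLUB_principalExactIdeal {S : Set M} {m : M} (h : IsExactLUB S m) :
    IsLUB (principalExactIdeal '' S) (principalExactIdeal m) := by
  refine ⟨Set.forall_mem_image.2 fun s hs =>
      principalExactIdeal_le_principalExactIdeal.2 (h.1.1 hs),
    fun J hJ => LowerSet.Iic_le.2 <| J.2 (fun s hs => LowerSet.Iic_le.1 (hJ ⟨s, hs, rfl⟩)) h⟩

end ExactIdeal

/-- Funayama for meet semilattices: every meet semilattice embeds
into a complete Boolean algebra by a map that is order-preserving and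
order-reflecting (hence injective), preserves all existing finite meets
(binary meets, and the top element whenever it exists), and preserves all
existing exact joins. -/
theorem funayama_meet_semilattice (M : Type u) [SemilatticeInf M] :
    ∃ (B : Type u) (inst : CompleteBooleanAlgebra B) (e : M → B),
      (∀ a b : M, a ≤ b ↔ inst.le (e a) (e b)) ∧
      (∀ a b : M, e (a ⊓ b) = inst.inf (e a) (e b)) ∧
      (∀ m : M, IsTop m → e m = inst.top) ∧
      (∀ (S : Set M) (m : M), IsLUB S m →
        (∀ a : M, IsLUB ((fun s => a ⊓ s) '' S) (a ⊓ m)) →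
        e m = inst.sSup (e '' S)) := by
  refine ⟨Heyting.Regular (Nucleus (exactIdeals M)), inferInstance,
    fun a => regularClosedNucleus (principalExactIdeal a), fun a b => ?_, fun a b => ?_,
    fun m hm => ?_, fun S m hlub hexact => ?_⟩
  · exact (regularClosedNucleus_le_regularClosedNucleus.trans
      principalExactIdeal_le_principalExactIdeal).symm
  · exact (congrArg regularClosedNucleus (principalExactIdeal_inf a b)).trans
      (regularClosedNucleus_inf _ _)
  · exact (congrArg regularClosedNucleus (principalExactIdeal_of_isTop hm)).trans
      regularClosedNucleus_top
  · dsimp only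
    rw [← (isLUB_principalExactIdeal ⟨hlub, hexact⟩).sSup_eq, regularClosedNucleus_sSup,
      Set.image_image]
end

section
/- For any distributive lattice L, there is an embedding of L into a complete Boolean algebra that preserves all existing finite meets, all existing exact joins, and all existing exact meets. -/
/-!
Represent `a : L` by the set `basicOpen a` of prime ideals avoiding `a`; by the prime ideal
theorem this is an order embedding preserving binary meets, and in the patch topology every
`basicOpen a` is clopen, hence regular open. Joins of regular open sets are interiors of
closures of unions, so a join `m` of `S` is preserved as soon as `⋃ s ∈ S, basicOpen s` is
dense in `basicOpen m`. That density is exactly exactness: if a basic patch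
`basicOpen a \ basicOpen b` misses the union then `a ⊓ s ≤ b` for all `s ∈ S`, hence
`a ⊓ m ≤ b`. Exact meets are dual.
-/

open Order TopologicalSpace

theorem Order.Ideal.exists_isPrime_of_not_le {L : Type*} [DistribLattice L] {p q : L}
    (h : ¬p ≤ q) : ∃ I : Ideal L, I.IsPrime ∧ q ∈ I ∧ p ∉ I := by
  have hdisj : Disjoint (PFilter.principal p : Set L) (Ideal.principal q : Set L) :=
    Set.disjoint_left.2 fun x hpx hxq =>
      h ((PFilter.mem_principal.1 hpx).trans (Ideal.mem_principal.1 hxq))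
  obtain ⟨I, hI, hqI, hpI⟩ := DistribLattice.prime_ideal_of_disjoint_filter_ideal hdisj
  exact ⟨I, hI, hqI (Ideal.mem_principal.2 le_rfl),
    Set.disjoint_left.1 hpI (PFilter.mem_principal.2 le_rfl)⟩

namespace Heyting.Regular

variable {α : Type*} [Order.Frame α]

instance inst_s11 : CompleteBooleanAlgebra (Regular α) :=
  { Regular.instBooleanAlgebra, gi.liftCompleteLattice with }

theorem coe_sSup (s : Set (Regular α)) :
    ((sSup s : Regular α) : α) = (sSup (((↑) : Regular α → α) '' s))ᶜᶜ :=
  rfl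

end Heyting.Regular

namespace TopologicalSpace.Opens

variable {X : Type*} [TopologicalSpace X]

theorem coe_compl_compl (U : Opens X) : ((Uᶜᶜ : Opens X) : Set X) = interior (closure U) := by
  rw [coe_compl_eq_interior_compl, coe_compl_eq_interior_compl, _root_.interior_compl,
    _root_.interior_compl, closure_compl, _root_.compl_compl]

theorem isRegular_of_isClopen {U : Opens X} (hU : IsClopen (U : Set X)) : Heyting.IsRegular U :=
  ext <| by rw [coe_compl_compl, hU.isClosed.closure_eq, U.isOpen.interior_eq]

theorem le_sSup_of_subset_closure {U : Heyting.Regular (Opens X)}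
    {s : Set (Heyting.Regular (Opens X))}
    (h : ((U : Opens X) : Set X) ⊆ closure (⋃ V ∈ s, ((V : Opens X) : Set X))) :
    U ≤ sSup s := by
  rw [← Heyting.Regular.coe_le_coe, Heyting.Regular.coe_sSup, ← SetLike.coe_subset_coe,
    coe_compl_compl, coe_sSup, Set.biUnion_image]
  exact interior_maximal h U.1.isOpen

theorem sInf_le_of_interior_subset {U : Heyting.Regular (Opens X)}
    {s : Set (Heyting.Regular (Opens X))}
    (h : interior (⋂ V ∈ s, ((V : Opens X) : Set X)) ⊆ ((U : Opens X) : Set X)) :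
    sInf s ≤ U := by
  rw [← Heyting.Regular.coe_le_coe, ← SetLike.coe_subset_coe]
  refine (interior_maximal (Set.subset_iInter₂ fun V hV => ?_) (sInf s).1.isOpen).trans h
  exact SetLike.coe_subset_coe.2 (Heyting.Regular.coe_le_coe.2 (sInf_le hV))

end TopologicalSpace.Opens

def PrimeIdeals (L : Type*) [DistribLattice L] : Type _ := {I : Ideal L // I.IsPrime}

namespace PrimeIdeals

variable {L : Type*} [DistribLattice L]

def basicOpen (a : L) : Set (PrimeIdeals L) := {I | a ∉ I.1}

variable (L) in
def patchBasis : Set (Set (PrimeIdeals L)) := {V | ∃ a b : L, V = basicOpen a \ basicOpen b}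

instance : TopologicalSpace (PrimeIdeals L) := generateFrom (patchBasis L)

theorem basicOpen_mono : Monotone (basicOpen (L := L)) :=
  fun _ _ hab _ hb ha => hb (Ideal.lower _ hab ha)

theorem basicOpen_inf (a b : L) : basicOpen (a ⊓ b) = basicOpen a ∩ basicOpen b := by
  ext I
  simp only [basicOpen, Set.mem_ofPred_eq, Set.mem_inter_iff, ← not_or]
  exact not_congr ⟨I.2.mem_or_mem,
    fun h => h.elim (I.1.lower inf_le_left) (I.1.lower inf_le_right)⟩

theorem basicOpen_sup (a b : L) : basicOpen (a ⊔ b) = basicOpen a ∪ basicOpen b := by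
  ext I
  simp only [basicOpen, Set.mem_ofPred_eq, Set.mem_union, ← not_and_or]
  exact not_congr ⟨fun h => ⟨I.1.lower le_sup_left h, I.1.lower le_sup_right h⟩,
    fun h => Ideal.sup_mem h.1 h.2⟩

theorem diff_basicOpen_nonempty_iff {a b : L} :
    (basicOpen a \ basicOpen b).Nonempty ↔ ¬a ≤ b := by
  refine ⟨fun ⟨I, ha, hb⟩ hab => ha (I.1.lower hab (not_not.1 hb)), fun h => ?_⟩
  obtain ⟨I, hI, hb, ha⟩ := Ideal.exists_isPrime_of_not_le h
  exact ⟨⟨I, hI⟩, ha, not_not.2 hb⟩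

theorem basicOpen_subset_basicOpen_iff {a b : L} : basicOpen a ⊆ basicOpen b ↔ a ≤ b := by
  rw [← Set.sdiff_eq_empty, ← Set.not_nonempty_iff_eq_empty, diff_basicOpen_nonempty_iff,
    not_not]

theorem basicOpen_eq_univ_of_isTop {m : L} (hm : IsTop m) : basicOpen m = Set.univ :=
  Set.eq_univ_of_forall fun I hmI =>
    I.2.ne_univ (Set.eq_univ_of_forall fun x => I.1.lower (hm x) hmI)

theorem exists_notMem (I : PrimeIdeals L) : ∃ a, a ∉ I.1 :=
  Set.ne_univ_iff_exists_notMem _ |>.1 I.2.ne_univ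

theorem diff_basicOpen_subset_basicOpen_iff {a b c : L} :
    basicOpen a \ basicOpen b ⊆ basicOpen c ↔ a ≤ b ⊔ c := by
  rw [Set.sdiff_subset_iff, ← basicOpen_sup, basicOpen_subset_basicOpen_iff]

theorem isTopologicalBasis_patchBasis : IsTopologicalBasis (patchBasis L) := by
  refine ⟨?_, ?_, rfl⟩
  · rintro _ ⟨a, b, rfl⟩ _ ⟨a', b', rfl⟩ I hI
    have h : basicOpen (a ⊓ a') \ basicOpen (b ⊔ b') =
        (basicOpen a \ basicOpen b) ∩ (basicOpen a' \ basicOpen b') := by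
      rw [basicOpen_inf, basicOpen_sup]
      ext
      simp only [Set.mem_sdiff, Set.mem_inter_iff, Set.mem_union]
      tauto
    exact ⟨_, ⟨_, _, rfl⟩, h ▸ hI, h.le⟩
  · refine Set.sUnion_eq_univ_iff.2 fun I => ?_
    obtain ⟨a, ha⟩ := exists_notMem I
    obtain ⟨b, hb⟩ := I.1.nonempty
    exact ⟨_, ⟨a, b, rfl⟩, ha, not_not.2 hb⟩

theorem isClopen_basicOpen (a : L) : IsClopen (basicOpen a) := by
  refine ⟨⟨isTopologicalBasis_patchBasis.isOpen_iff.2 fun I hI => ?_⟩,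
    isTopologicalBasis_patchBasis.isOpen_iff.2 fun I hI => ?_⟩
  · obtain ⟨c, hc⟩ := exists_notMem I
    exact ⟨_, ⟨c, a, rfl⟩, ⟨hc, hI⟩, fun _ h => h.2⟩
  · obtain ⟨b, hb⟩ := I.1.nonempty
    exact ⟨_, ⟨a, b, rfl⟩, ⟨hI, not_not.2 hb⟩, fun _ h => h.1⟩

theorem basicOpen_subset_closure_biUnion {S : Set L} {m : L}
    (hm : ∀ a, IsLUB ((fun s => a ⊓ s) '' S) (a ⊓ m)) :
    basicOpen m ⊆ closure (⋃ s ∈ S, basicOpen s) := by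
  intro J hmJ
  refine isTopologicalBasis_patchBasis.mem_closure_iff.2 ?_
  rintro _ ⟨a, b, rfl⟩ ⟨haJ, hbJ⟩
  by_contra hempty
  have hle : ∀ s ∈ S, a ⊓ s ≤ b := fun s hs => not_not.1 fun h => hempty <| by
    obtain ⟨I, hI⟩ := diff_basicOpen_nonempty_iff.2 h
    rw [basicOpen_inf] at hI
    exact ⟨I, ⟨hI.1.1, hI.2⟩, Set.mem_biUnion hs hI.1.2⟩
  refine hbJ (basicOpen_mono ((hm a).2 (Set.forall_mem_image.2 hle)) ?_)
  rw [basicOpen_inf]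
  exact ⟨haJ, hmJ⟩

theorem interior_biInter_subset_basicOpen {S : Set L} {m : L}
    (hm : ∀ a, IsGLB ((fun s => a ⊔ s) '' S) (a ⊔ m)) :
    interior (⋂ s ∈ S, basicOpen s) ⊆ basicOpen m := by
  intro J hJ
  obtain ⟨_, ⟨a, b, rfl⟩, ⟨haJ, hbJ⟩, hsub⟩ :=
    isTopologicalBasis_patchBasis.mem_nhds_iff.1 (mem_interior_iff_mem_nhds.1 hJ)
  have hle : ∀ s ∈ S, a ≤ b ⊔ s := fun s hs =>
    diff_basicOpen_subset_basicOpen_iff.1 (hsub.trans (Set.biInter_subset_of_mem hs))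
  have hJ' := basicOpen_mono ((hm b).2 (Set.forall_mem_image.2 hle)) haJ
  rw [basicOpen_sup] at hJ'
  exact hJ'.resolve_left hbJ

def toRegularOpens (a : L) : Heyting.Regular (Opens (PrimeIdeals L)) :=
  ⟨⟨basicOpen a, (isClopen_basicOpen a).isOpen⟩,
    Opens.isRegular_of_isClopen (isClopen_basicOpen a)⟩

theorem toRegularOpens_le_toRegularOpens_iff {a b : L} :
    toRegularOpens a ≤ toRegularOpens b ↔ a ≤ b := by
  rw [← Heyting.Regular.coe_le_coe, ← SetLike.coe_subset_coe]
  exact basicOpen_subset_basicOpen_iff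

theorem toRegularOpens_mono : Monotone (toRegularOpens (L := L)) :=
  fun _ _ => toRegularOpens_le_toRegularOpens_iff.2

theorem toRegularOpens_inf (a b : L) :
    toRegularOpens (a ⊓ b) = toRegularOpens a ⊓ toRegularOpens b :=
  Heyting.Regular.coe_injective (Opens.ext (basicOpen_inf a b))

theorem toRegularOpens_eq_top_of_isTop {m : L} (hm : IsTop m) : toRegularOpens m = ⊤ :=
  Heyting.Regular.coe_injective (Opens.ext (basicOpen_eq_univ_of_isTop hm))

theorem toRegularOpens_eq_sSup_of_isLUB {S : Set L} {m : L} (hS : IsLUB S m)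
    (hm : ∀ a, IsLUB ((fun s => a ⊓ s) '' S) (a ⊓ m)) :
    toRegularOpens m = sSup (toRegularOpens '' S) := by
  refine le_antisymm (Opens.le_sSup_of_subset_closure ?_)
    (sSup_le (Set.forall_mem_image.2 fun s hs => toRegularOpens_mono (hS.1 hs)))
  rw [Set.biUnion_image]
  exact basicOpen_subset_closure_biUnion hm

theorem toRegularOpens_eq_sInf_of_isGLB {S : Set L} {m : L} (hS : IsGLB S m)
    (hm : ∀ a, IsGLB ((fun s => a ⊔ s) '' S) (a ⊔ m)) :
    toRegularOpens m = sInf (toRegularOpens '' S) := by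
  refine le_antisymm (le_sInf (Set.forall_mem_image.2 fun s hs => toRegularOpens_mono (hS.1 hs)))
    (Opens.sInf_le_of_interior_subset ?_)
  rw [Set.biInter_image]
  exact interior_biInter_subset_basicOpen hm

end PrimeIdeals

/-- Funayama for distributive lattices: every distributive
lattice embeds into a complete Boolean algebra by a map that is
order-preserving and order-reflecting (hence injective), preserves all
existing finite meets (binary meets, and the top whenever it exists),
all existing exact joins, and all existing exact meets. -/
theorem funayama_distrib_lattice (L : Type u) [DistribLattice L] :
    ∃ (B : Type u) (inst : CompleteBooleanAlgebra B) (e : L → B),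
      (∀ a b : L, a ≤ b ↔ inst.le (e a) (e b)) ∧
      (∀ a b : L, e (a ⊓ b) = inst.inf (e a) (e b)) ∧
      (∀ m : L, IsTop m → e m = inst.top) ∧
      (∀ (S : Set L) (m : L), IsLUB S m →
        (∀ a : L, IsLUB ((fun s => a ⊓ s) '' S) (a ⊓ m)) →
        e m = inst.sSup (e '' S)) ∧
      (∀ (S : Set L) (m : L), IsGLB S m →
        (∀ a : L, IsGLB ((fun s => a ⊔ s) '' S) (a ⊔ m)) →
        e m = inst.sInf (e '' S)) :=
  ⟨_, inferInstance, PrimeIdeals.toRegularOpens,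
    fun _ _ => PrimeIdeals.toRegularOpens_le_toRegularOpens_iff.symm,
    PrimeIdeals.toRegularOpens_inf, fun _ => PrimeIdeals.toRegularOpens_eq_top_of_isTop,
    fun _ _ => PrimeIdeals.toRegularOpens_eq_sSup_of_isLUB,
    fun _ _ => PrimeIdeals.toRegularOpens_eq_sInf_of_isGLB⟩
end
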